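/- Let f, g₁,…,gₛ, h₁,…,hₖ be partial n-place functions on A and let i₁,…,iₛ, j₁,…,jₖ ∈ {1,…,n}. For each i define μᵢ(∘ᵢ₁…∘ᵢₛ g₁…gₛ) = g_p ∘ᵢ_{p+1} g_{p+1} ⋯ ∘ᵢₛ gₛ where p is the least index with i_p = i (undefined if no such p exists). If for every i ∈ {1,…,n}, μᵢ of the first composition sequence equals μᵢ of the second (both defined and equal, or both undefined), then f ∘ᵢ₁ g₁ ⋯ ∘ᵢₛ gₛ = f ∘ⱼ₁ h₁ ⋯ ∘ⱼₖ hₖ. -/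

import Mathlib

/-!
An iterated Mann composition is a Menger superposition:
`f ∘ᵢ₁ g₁ ⋯ ∘ᵢₛ gₛ = f[G₁, …, Gₙ]`, where `Gᵢ` is `μᵢ` when it is defined and the projector `Iⁱ`
otherwise. Hence the composition depends on the sequence only through the `μᵢ`. The identity
follows by induction on the sequence from `(f ∘ⱼ g)[G] = f[G₁, …, g[G], …, Gₙ]` (`g[G]` in place `j`).
-/

/-- The type of partial `n`-place functions on `A`. -/
abbrev PFn (n : ℕ) (A : Type) := (Fin n → A) → Option A

/-- Menger superposition `f[g₁ … gₙ]`. -/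
def Menger {n : ℕ} {A : Type} (f : PFn n A) (g : Fin n → PFn n A) : PFn n A :=
  fun a => if h : ∀ i, (g i a).isSome then f (fun i => (g i a).get (h i)) else none

/-- The `i`-th `n`-place projector `Iⁱ`. -/
def proj {n : ℕ} {A : Type} (i : Fin n) : PFn n A := fun a => some (a i)

/-- The `i`-th Mann composition `f ∘ᵢ g`. -/
def mann {n : ℕ} {A : Type} (i : Fin n) (f g : PFn n A) : PFn n A :=
  fun a => (g a).bind fun b => f (Function.update a i b)

/-- Iterated Mann composition `f ∘ᵢ₁ g₁ ∘ᵢ₂ ⋯ ∘ᵢₛ gₛ` (left to right). -/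
def iter {n : ℕ} {A : Type} (f : PFn n A) : List (Fin n × PFn n A) → PFn n A
  | [] => f
  | p :: l => iter (mann p.1 f p.2) l

/-- `μᵢ(∘ᵢ₁ … ∘ᵢₛ g₁ … gₛ)`. -/
def mu {n : ℕ} {A : Type} (i : Fin n) : List (Fin n × PFn n A) → Option (PFn n A)
  | [] => none
  | p :: l => if p.1 = i then some (iter p.2 l) else mu i l

section Menger

variable {n : ℕ} {A : Type}

theorem menger_proj (f : PFn n A) : Menger f proj = f := by
  funext a
  simp [Menger, proj]

theorem menger_apply_of_forall_eq_some {f : PFn n A} {G : Fin n → PFn n A} {a c : Fin n → A}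
    (h : ∀ i, G i a = some (c i)) : Menger f G a = f c := by
  simp [Menger, h]

theorem menger_apply_of_eq_none (f : PFn n A) {G : Fin n → PFn n A} {a : Fin n → A} {i : Fin n}
    (h : G i a = none) : Menger f G a = none :=
  dif_neg fun hs => by simpa [h] using hs i

theorem menger_mann (j : Fin n) (f g : PFn n A) (G : Fin n → PFn n A) :
    Menger (mann j f g) G = Menger f (Function.update G j (Menger g G)) := by
  funext a
  by_cases hG : ∀ i, (G i a).isSome
  · choose c hc using fun i => Option.isSome_iff_exists.mp (hG i)
    have hg : Menger g G a = g c := menger_apply_of_forall_eq_some hc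
    rw [menger_apply_of_forall_eq_some hc, mann]
    cases hgc : g c with
    | none => exact (menger_apply_of_eq_none f (i := j) (by simp [hg, hgc])).symm
    | some b =>
      refine (menger_apply_of_forall_eq_some fun i => ?_).symm
      rcases eq_or_ne i j with rfl | hij
      · simp [hg, hgc]
      · simp [hij, hc]
  · obtain ⟨i, hi⟩ : ∃ i, G i a = none := by simpa using hG
    rw [menger_apply_of_eq_none _ hi]
    rcases eq_or_ne i j with rfl | hij
    · exact (menger_apply_of_eq_none f (i := i) (by simp [menger_apply_of_eq_none g hi])).symm
    · exact (menger_apply_of_eq_none f (i := i) (by simp [hij, hi])).symm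

end Menger

theorem iter_eq_menger_mu {n : ℕ} {A : Type} (f : PFn n A) (l : List (Fin n × PFn n A)) :
    iter f l = Menger f fun i => (mu i l).getD (proj i) := by
  induction l generalizing f with
  | nil => exact (menger_proj f).symm
  | cons p l ih =>
    obtain ⟨j, g⟩ := p
    have hmu : (fun i => (mu i ((j, g) :: l)).getD (proj i)) =
        Function.update (fun i => (mu i l).getD (proj i)) j (iter g l) := by
      funext i
      rcases eq_or_ne i j with rfl | hij
      · simp [mu]
      · simp [mu, hij, Ne.symm hij]
    rw [iter, ih, menger_mann, hmu, ih]

/-- Proposition 2: if `μᵢ` of the two composition sequences agree for every `i`,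
then the iterated Mann compositions agree. -/
theorem iter_eq_of_mu_eq {n : ℕ} {A : Type} (f : PFn n A)
    (l₁ l₂ : List (Fin n × PFn n A)) (h : ∀ i, mu i l₁ = mu i l₂) :
    iter f l₁ = iter f l₂ := by
  simp only [iter_eq_menger_mu, h]
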